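/- arXiv:2411.07825 — 2 statements merged into one kernel-verified Lean document; each statement's English description precedes it below -/
import Mathlib

section
/- Let K₀ be an m×n real matrix such that A − BK₀ is Schur stable, and let sequences (P_i)_{i≥0} and (K_i)_{i≥0} satisfy: P_i is a real symmetric matrix with P_i = Q + K_iᵀRK_i + (A − BK_i)ᵀP_i(A − BK_i), and K_{i+1} = (R + BᵀP_iB)⁻¹BᵀP_iA for all i ≥ 0. If P★ is a symmetric positive definite solution of the ARE, then the sequence P_i converges entrywise to P★ and the sequence K_i converges entrywise to K★ = (R + BᵀP★B)⁻¹BᵀP★A as i → ∞. -/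
/-!
Hewer's policy iteration. Completing the square shows that, for `X ≥ 0`, the gain
`(R + BᵀXB)⁻¹BᵀXA` minimizes `Q + KᵀRK + (A - BK)ᵀX(A - BK)` in the Loewner order. So each new
gain `K (i+1)` satisfies a Lyapunov inequality with the old cost `P i`, which together with
observability makes it stabilizing; comparing Lyapunov equations along stable closed loops then
gives `P★ ≤ P (i+1) ≤ P i`. The monotone limit is again a fixed point of the iteration, and
comparing it with `P★` along the stable loop `A - BK★` gives equality.
-/

open Matrix Filter

/-- A real square matrix is Schur stable if every eigenvalue of it, viewed as a
complex matrix, has modulus strictly less than `1`. -/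
def SchurStable {n : ℕ} (M : Matrix (Fin n) (Fin n) ℝ) : Prop :=
  ∀ μ ∈ spectrum ℂ (M.map (algebraMap ℝ ℂ)), ‖μ‖ < 1

open Topology
open scoped MatrixOrder

theorem tendsto_pow_atTop_nhds_zero_of_spectralRadius_lt_one {𝔸 : Type*} [NormedRing 𝔸]
    [NormedAlgebra ℂ 𝔸] [CompleteSpace 𝔸] {a : 𝔸} (h : spectralRadius ℂ a < 1) :
    Tendsto (a ^ ·) atTop (𝓝 0) := by
  obtain ⟨r, hρr, hr1⟩ := ENNReal.lt_iff_exists_nnreal_btwn.mp h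
  have hgelfand := spectrum.pow_nnnorm_pow_one_div_tendsto_nhds_spectralRadius a
  have hev : ∀ᶠ k : ℕ in atTop, ‖a ^ k‖₊ ≤ r ^ k := by
    filter_upwards [hgelfand.eventually_lt_const hρr, eventually_ge_atTop 1] with k hk hk1
    have := ENNReal.rpow_le_rpow hk.le (z := k) (by positivity)
    rwa [← ENNReal.rpow_mul, one_div_mul_cancel (by positivity), ENNReal.rpow_one,
      ENNReal.rpow_natCast, ← ENNReal.coe_pow, ENNReal.coe_le_coe] at this
  refine squeeze_zero_norm' (hev.mono fun k hk => ?_)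
    (tendsto_pow_atTop_nhds_zero_of_lt_one r.coe_nonneg (by exact_mod_cast hr1))
  exact_mod_cast hk

theorem SchurStable.tendsto_pow {n : ℕ} {M : Matrix (Fin n) (Fin n) ℝ} (hM : SchurStable M) :
    Tendsto (M ^ ·) atTop (𝓝 0) := by
  let := Matrix.linftyOpNormedRing (n := Fin n) (α := ℂ)
  let := Matrix.linftyOpNormedAlgebra (n := Fin n) (R := ℂ) (α := ℂ)
  set Mℂ := M.map (algebraMap ℝ ℂ)
  have hρ : spectralRadius ℂ Mℂ < 1 := by
    rcases (spectrum ℂ Mℂ).eq_empty_or_nonempty with h | h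
    · simp [spectralRadius, h]
    · exact_mod_cast spectrum.spectralRadius_lt_of_forall_lt_of_nonempty h (r := 1)
        fun μ hμ => by exact_mod_cast hM μ hμ
  have hre : Continuous fun X : Matrix (Fin n) (Fin n) ℂ => X.map Complex.re :=
    continuous_id.matrix_map Complex.continuous_re
  convert (hre.tendsto 0).comp (tendsto_pow_atTop_nhds_zero_of_spectralRadius_lt_one hρ)
    using 2 with k
  · simp only [Function.comp_apply, Mℂ]
    rw [← RingHom.mapMatrix_apply, ← map_pow, RingHom.mapMatrix_apply, Matrix.map_map]
    ext; simp
  · simp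

namespace Matrix

variable {ι : Type*} [Fintype ι]

theorem eq_transpose_pow_mul_mul_pow_add_sum {R : Type*} [DecidableEq ι] [CommRing R]
    {M Δ S : Matrix ι ι R} (h : Δ = S + Mᵀ * Δ * M) (k : ℕ) :
    Δ = (M ^ k)ᵀ * Δ * M ^ k + ∑ j ∈ Finset.range k, (M ^ j)ᵀ * S * M ^ j := by
  induction k with
  | zero => simp
  | succ k ih =>
    conv_lhs => rw [ih, h]
    simp only [Finset.sum_range_succ, pow_succ' M k, transpose_mul, Matrix.mul_add,
      Matrix.add_mul, Matrix.mul_assoc]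
    abel

theorem transpose_mul_mul_nonneg {κ : Type*} [Fintype κ] {S : Matrix ι ι ℝ} (hS : 0 ≤ S)
    (X : Matrix ι κ ℝ) : 0 ≤ Xᵀ * S * X := by
  simpa [conjTranspose_eq_transpose_of_trivial] using
    (hS.posSemidef.conjTranspose_mul_mul_same X).nonneg

theorem dotProduct_mulVec_transpose_mul_mul {κ : Type*} [Fintype κ] (X : Matrix ι κ ℝ)
    (S : Matrix ι ι ℝ) (x : κ → ℝ) : x ⬝ᵥ (Xᵀ * S * X) *ᵥ x = (X *ᵥ x) ⬝ᵥ S *ᵥ (X *ᵥ x) := by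
  rw [← mulVec_mulVec, ← mulVec_mulVec, dotProduct_mulVec x, vecMul_transpose]

theorem isClosed_setOf_posSemidef : IsClosed {X : Matrix ι ι ℝ | X.PosSemidef} := by
  have : {X : Matrix ι ι ℝ | X.PosSemidef} =
      {X | Xᵀ = X} ∩ ⋂ x : ι → ℝ, {X | 0 ≤ x ⬝ᵥ X *ᵥ x} := by
    ext X
    simp [posSemidef_iff_dotProduct_mulVec, IsHermitian, conjTranspose_eq_transpose_of_trivial]
  rw [this]
  exact (isClosed_eq continuous_id.matrix_transpose continuous_id).inter <|
    isClosed_iInter fun x => isClosed_le continuous_const <|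
      continuous_const.dotProduct (continuous_id.matrix_mulVec continuous_const)

instance orderClosedTopology : OrderClosedTopology (Matrix ι ι ℝ) where
  isClosed_le' := isClosed_setOf_posSemidef.preimage (continuous_snd.sub continuous_fst)

theorem IsSymm.apply_eq_polar [DecidableEq ι] {X : Matrix ι ι ℝ} (hX : X.IsSymm) (k l : ι) :
    X k l = ((Pi.single k 1 + Pi.single l 1) ⬝ᵥ X *ᵥ (Pi.single k 1 + Pi.single l 1)
      - Pi.single k 1 ⬝ᵥ X *ᵥ Pi.single k 1 - Pi.single l 1 ⬝ᵥ X *ᵥ Pi.single l 1) / 2 := by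
  have hlk : X l k = X k l := hX.apply k l
  simp only [add_dotProduct, mulVec_add, dotProduct_add, single_dotProduct, mulVec_single,
    one_mul, MulOpposite.op_one, one_smul, col_apply]
  linarith

theorem exists_tendsto_of_antitone_of_bddBelow {P : ℕ → Matrix ι ι ℝ} (hP : Antitone P)
    (hbdd : BddBelow (Set.range P)) : ∃ X, Tendsto P atTop (𝓝 X) := by
  classical
  obtain ⟨L, hL⟩ := hbdd
  replace hL : ∀ i, L ≤ P i := fun i => hL ⟨i, rfl⟩
  have hquad : ∀ x : ι → ℝ, ∃ c, Tendsto (fun i => x ⬝ᵥ (P i - L) *ᵥ x) atTop (𝓝 c) := by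
    intro x
    refine ⟨_, tendsto_atTop_ciInf (fun i j hij => ?_) ⟨0, ?_⟩⟩
    · simpa [sub_mulVec, dotProduct_sub] using (le_iff.mp (hP hij)).dotProduct_mulVec_nonneg x
    · rintro _ ⟨i, rfl⟩
      simpa using (le_iff.mp (hL i)).dotProduct_mulVec_nonneg x
  choose c hc using hquad
  have hD : ∀ k l, ∃ d, Tendsto (fun i => (P i - L) k l) atTop (𝓝 d) := fun k l =>
    ⟨_, (((hc _).sub (hc _)).sub (hc _)).div_const 2 |>.congr fun i =>
      ((isHermitian_iff_isSymm.mp (le_iff.mp (hL i)).isHermitian).apply_eq_polar k l).symm⟩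
  choose d hd using hD
  refine ⟨L + of d, ?_⟩
  have : Tendsto (fun i => P i - L) atTop (𝓝 (of d)) :=
    tendsto_pi_nhds.mpr fun k => tendsto_pi_nhds.mpr (hd k)
  simpa using this.const_add L

end Matrix

theorem SchurStable.nonneg_of_lyapunov {n : ℕ} {M Δ S : Matrix (Fin n) (Fin n) ℝ}
    (hM : SchurStable M) (hS : 0 ≤ S) (h : Δ = S + Mᵀ * Δ * M) : 0 ≤ Δ := by
  have hle : ∀ k, (M ^ k)ᵀ * Δ * M ^ k ≤ Δ := fun k => by
    conv_rhs => rw [eq_transpose_pow_mul_mul_pow_add_sum h k]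
    exact le_add_of_nonneg_right (Finset.sum_nonneg fun j _ => transpose_mul_mul_nonneg hS _)
  have hc : Continuous fun X : Matrix (Fin n) (Fin n) ℝ => Xᵀ * Δ * X := by fun_prop
  have hlim : Tendsto (fun k => (M ^ k)ᵀ * Δ * M ^ k) atTop (𝓝 0) := by
    simpa only [Function.comp_def, transpose_zero, Matrix.zero_mul, Matrix.mul_zero] using
      (hc.tendsto 0).comp hM.tendsto_pow
  exact le_of_tendsto' hlim hle

section Rotation

variable {ι : Type*} [Fintype ι]

theorem exists_rotation_of_mem_spectrum [DecidableEq ι] {M : Matrix ι ι ℝ} {μ : ℂ}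
    (hμ : μ ∈ spectrum ℂ (M.map (algebraMap ℝ ℂ))) :
    ∃ x y : ι → ℝ, (x ≠ 0 ∨ y ≠ 0) ∧
      M *ᵥ x = μ.re • x - μ.im • y ∧ M *ᵥ y = μ.im • x + μ.re • y := by
  rw [← spectrum_toLin', ← Module.End.hasEigenvalue_iff_mem_spectrum] at hμ
  obtain ⟨v, hv⟩ := hμ.exists_hasEigenvector
  have hMv : M.map (algebraMap ℝ ℂ) *ᵥ v = μ • v := by simpa using hv.apply_eq_smul
  refine ⟨fun j => (v j).re, fun j => (v j).im, ?_, ?_, ?_⟩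
  · by_contra! h
    exact hv.2 (funext fun j => Complex.ext (congrFun h.1 j) (congrFun h.2 j))
  · ext i
    have := congrArg Complex.re (congrFun hMv i)
    simp [mulVec, dotProduct, Complex.re_sum] at this ⊢
    linarith
  · ext i
    have := congrArg Complex.im (congrFun hMv i)
    simp [mulVec, dotProduct, Complex.im_sum] at this ⊢
    linarith

theorem dotProduct_mulVec_rotation {X : Matrix ι ι ℝ} (hX : X.IsSymm) (x y : ι → ℝ) (a b : ℝ) :
    (a • x - b • y) ⬝ᵥ X *ᵥ (a • x - b • y) + (b • x + a • y) ⬝ᵥ X *ᵥ (b • x + a • y)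
      = (a ^ 2 + b ^ 2) * (x ⬝ᵥ X *ᵥ x + y ⬝ᵥ X *ᵥ y) := by
  have hxy : y ⬝ᵥ X *ᵥ x = x ⬝ᵥ X *ᵥ y := by
    rw [dotProduct_mulVec, ← hX.eq, vecMul_transpose, dotProduct_comm, hX.eq]
  simp only [mulVec_add, mulVec_sub, mulVec_smul, dotProduct_add, dotProduct_sub,
    dotProduct_smul, add_dotProduct, sub_dotProduct, smul_dotProduct, smul_eq_mul, hxy]
  ring

theorem eq_zero_of_rotation [DecidableEq ι] {A Q : Matrix ι ι ℝ}
    (hObs : ∀ x : ι → ℝ, (∀ k : ℕ, Q *ᵥ (A ^ k *ᵥ x) = 0) → x = 0) {x y : ι → ℝ} {a b : ℝ}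
    (hAx : A *ᵥ x = a • x - b • y) (hAy : A *ᵥ y = b • x + a • y)
    (hQx : Q *ᵥ x = 0) (hQy : Q *ᵥ y = 0) : x = 0 ∧ y = 0 := by
  set W := Submodule.span ℝ {x, y}
  have hx : x ∈ W := Submodule.subset_span (by simp)
  have hy : y ∈ W := Submodule.subset_span (by simp)
  have hAW : W ≤ W.comap (toLin' A) := by
    rw [Submodule.span_le, Set.insert_subset_iff, Set.singleton_subset_iff]
    constructor
    · simpa [hAx] using W.sub_mem (W.smul_mem a hx) (W.smul_mem b hy)
    · simpa [hAy] using W.add_mem (W.smul_mem b hx) (W.smul_mem a hy)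
  have hQW : W ≤ LinearMap.ker (toLin' Q) := by
    rw [Submodule.span_le, Set.insert_subset_iff, Set.singleton_subset_iff]
    exact ⟨by simpa using hQx, by simpa using hQy⟩
  have hpow : ∀ z ∈ W, ∀ k : ℕ, A ^ k *ᵥ z ∈ W := fun z hz k => by
    induction k with
    | zero => simpa using hz
    | succ k ih => simpa [pow_succ', ← mulVec_mulVec] using hAW ih
  have hzero : ∀ z ∈ W, z = 0 := fun z hz =>
    hObs z fun k => by simpa using hQW (hpow z hz k)
  exact ⟨hzero x hx, hzero y hy⟩

end Rotation

theorem mulVec_eq_zero_of_dotProduct_mulVec_add_le_zero {ι κ : Type*} [Fintype ι] [Fintype κ]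
    [DecidableEq κ] {Q : Matrix ι ι ℝ} {R : Matrix κ κ ℝ} (hQ : Q.PosSemidef) (hR : R.PosDef)
    {K : Matrix κ ι ℝ} {z : ι → ℝ} (h : z ⬝ᵥ Q *ᵥ z + (K *ᵥ z) ⬝ᵥ R *ᵥ (K *ᵥ z) ≤ 0) :
    Q *ᵥ z = 0 ∧ K *ᵥ z = 0 := by
  have hQz : 0 ≤ z ⬝ᵥ Q *ᵥ z := by simpa using hQ.dotProduct_mulVec_nonneg z
  have hRz : 0 ≤ (K *ᵥ z) ⬝ᵥ R *ᵥ (K *ᵥ z) := by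
    simpa using hR.posSemidef.dotProduct_mulVec_nonneg (K *ᵥ z)
  refine ⟨(hQ.dotProduct_mulVec_zero_iff z).mp (by simpa using by linarith), ?_⟩
  by_contra hKz
  have := hR.dotProduct_mulVec_pos hKz
  simp only [star_trivial] at this
  linarith

section Riccati

variable {n m : ℕ} (A : Matrix (Fin n) (Fin n) ℝ) (B : Matrix (Fin n) (Fin m) ℝ)
  (Q : Matrix (Fin n) (Fin n) ℝ) (R : Matrix (Fin m) (Fin m) ℝ)

def closedLoopCost (K : Matrix (Fin m) (Fin n) ℝ) (X : Matrix (Fin n) (Fin n) ℝ) :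
    Matrix (Fin n) (Fin n) ℝ :=
  Q + Kᵀ * R * K + (A - B * K)ᵀ * X * (A - B * K)

noncomputable def riccatiGain (X : Matrix (Fin n) (Fin n) ℝ) : Matrix (Fin m) (Fin n) ℝ :=
  (R + Bᵀ * X * B)⁻¹ * (Bᵀ * X * A)

variable {A B Q R} {X : Matrix (Fin n) (Fin n) ℝ}

theorem closedLoopCost_sub_closedLoopCost (K : Matrix (Fin m) (Fin n) ℝ)
    (X Y : Matrix (Fin n) (Fin n) ℝ) :
    closedLoopCost A B Q R K X - closedLoopCost A B Q R K Y
      = (A - B * K)ᵀ * (X - Y) * (A - B * K) := by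
  simp only [closedLoopCost, Matrix.mul_sub, Matrix.sub_mul]
  abel

theorem closedLoopCost_eq (K : Matrix (Fin m) (Fin n) ℝ) (X : Matrix (Fin n) (Fin n) ℝ) :
    closedLoopCost A B Q R K X = Q + Aᵀ * X * A + Kᵀ * (R + Bᵀ * X * B) * K
      - Kᵀ * (Bᵀ * X * A) - Aᵀ * X * B * K := by
  simp only [closedLoopCost, transpose_sub, transpose_mul, Matrix.sub_mul, Matrix.mul_sub,
    Matrix.add_mul, Matrix.mul_add, Matrix.mul_assoc]
  abel

theorem mul_riccatiGain (hG : IsUnit (R + Bᵀ * X * B).det) :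
    (R + Bᵀ * X * B) * riccatiGain A B R X = Bᵀ * X * A :=
  mul_nonsing_inv_cancel_left _ _ hG

theorem riccatiGain_transpose_mul (hX : X.IsSymm) (hR : R.IsSymm)
    (hG : IsUnit (R + Bᵀ * X * B).det) :
    (riccatiGain A B R X)ᵀ * (R + Bᵀ * X * B) = Aᵀ * X * B := by
  have hGsymm : (R + Bᵀ * X * B)ᵀ = R + Bᵀ * X * B := by
    simp only [transpose_add, transpose_mul, transpose_transpose, hX.eq, hR.eq, Matrix.mul_assoc]
  rw [← hGsymm, ← transpose_mul, mul_riccatiGain hG]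
  simp only [transpose_mul, transpose_transpose, hX.eq, Matrix.mul_assoc]

theorem closedLoopCost_eq_closedLoopCost_riccatiGain_add (hX : X.IsSymm) (hR : R.IsSymm)
    (hG : IsUnit (R + Bᵀ * X * B).det) (K : Matrix (Fin m) (Fin n) ℝ) :
    closedLoopCost A B Q R K X = closedLoopCost A B Q R (riccatiGain A B R X) X
      + (K - riccatiGain A B R X)ᵀ * (R + Bᵀ * X * B) * (K - riccatiGain A B R X) := by
  rw [closedLoopCost_eq, closedLoopCost_eq, ← mul_riccatiGain hG,
    ← riccatiGain_transpose_mul hX hR hG]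
  simp only [transpose_sub, Matrix.sub_mul, Matrix.mul_sub, Matrix.mul_assoc]
  abel

theorem closedLoopCost_riccatiGain (hX : X.IsSymm) (hR : R.IsSymm)
    (hG : IsUnit (R + Bᵀ * X * B).det) :
    closedLoopCost A B Q R (riccatiGain A B R X) X
      = Q + Aᵀ * X * A - Aᵀ * X * B * (R + Bᵀ * X * B)⁻¹ * (Bᵀ * X * A) := by
  rw [closedLoopCost_eq, Matrix.mul_assoc (Aᵀ * X * B), ← riccatiGain, ← mul_riccatiGain hG,
    ← Matrix.mul_assoc, riccatiGain_transpose_mul hX hR hG]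
  abel

theorem Matrix.PosDef.add_transpose_mul_mul (hR : R.PosDef) (hX : 0 ≤ X)
    (B : Matrix (Fin n) (Fin m) ℝ) :
    (R + Bᵀ * X * B).PosDef :=
  hR.add_posSemidef (transpose_mul_mul_nonneg hX B).posSemidef

theorem closedLoopCost_riccatiGain_eq_self (hR : R.PosDef) (hX : 0 ≤ X)
    (hARE : Aᵀ * X * A - X - Aᵀ * X * B * (R + Bᵀ * X * B)⁻¹ * (Bᵀ * X * A) + Q = 0) :
    closedLoopCost A B Q R (riccatiGain A B R X) X = X := by
  rw [closedLoopCost_riccatiGain (isHermitian_iff_isSymm.mp hX.posSemidef.isHermitian)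
    (isHermitian_iff_isSymm.mp hR.isHermitian)
    ((isUnit_iff_isUnit_det _).mp (hR.add_transpose_mul_mul hX B).isUnit),
    ← sub_eq_zero, ← hARE]
  abel

theorem closedLoopCost_riccatiGain_le (hR : R.PosDef) (hX : 0 ≤ X)
    (K : Matrix (Fin m) (Fin n) ℝ) :
    closedLoopCost A B Q R (riccatiGain A B R X) X ≤ closedLoopCost A B Q R K X := by
  have hG := hR.add_transpose_mul_mul hX B
  rw [closedLoopCost_eq_closedLoopCost_riccatiGain_add
    (isHermitian_iff_isSymm.mp hX.posSemidef.isHermitian) (isHermitian_iff_isSymm.mp hR.isHermitian)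
    ((isUnit_iff_isUnit_det _).mp hG.isUnit) K]
  exact le_add_of_nonneg_right (transpose_mul_mul_nonneg hG.posSemidef.nonneg _)

end Riccati

section PolicyIteration

variable {n m : ℕ} {A : Matrix (Fin n) (Fin n) ℝ} {B : Matrix (Fin n) (Fin m) ℝ}
  {Q : Matrix (Fin n) (Fin n) ℝ} {R : Matrix (Fin m) (Fin m) ℝ}

theorem tendsto_closedLoopCost {α : Type*} {l : Filter α}
    {K : α → Matrix (Fin m) (Fin n) ℝ} {P : α → Matrix (Fin n) (Fin n) ℝ}
    {K₀ : Matrix (Fin m) (Fin n) ℝ} {P₀ : Matrix (Fin n) (Fin n) ℝ}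
    (hK : Tendsto K l (𝓝 K₀)) (hP : Tendsto P l (𝓝 P₀)) :
    Tendsto (fun a => closedLoopCost A B Q R (K a) (P a)) l
      (𝓝 (closedLoopCost A B Q R K₀ P₀)) := by
  have hc : Continuous fun p : Matrix (Fin m) (Fin n) ℝ × Matrix (Fin n) (Fin n) ℝ =>
      closedLoopCost A B Q R p.1 p.2 := by
    unfold closedLoopCost
    fun_prop
  -- elaborating this term directly against the goal times out
  have := (hc.tendsto (K₀, P₀)).comp (hK.prodMk_nhds hP)
  exact this

theorem continuousAt_riccatiGain {X : Matrix (Fin n) (Fin n) ℝ} (hR : R.PosDef) (hX : 0 ≤ X) :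
    ContinuousAt (riccatiGain A B R) X := by
  have hdet : IsUnit (R + Bᵀ * X * B).det :=
    (isUnit_iff_isUnit_det _).mp (hR.add_transpose_mul_mul hX B).isUnit
  have hG : Continuous fun Y : Matrix (Fin n) (Fin n) ℝ => R + Bᵀ * Y * B := by fun_prop
  have hinv : ContinuousAt (fun Y => (R + Bᵀ * Y * B)⁻¹) X :=
    (continuousAt_matrix_inv _ (NormedRing.inverse_continuousAt hdet.unit)).comp
      (f := fun Y => R + Bᵀ * Y * B) hG.continuousAt
  have hBXA : Continuous fun Y : Matrix (Fin n) (Fin n) ℝ => Bᵀ * Y * A := by fun_prop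
  exact (continuous_fst.matrix_mul continuous_snd).continuousAt.comp
    (hinv.prodMk hBXA.continuousAt)

theorem le_of_le_closedLoopCost {K : Matrix (Fin m) (Fin n) ℝ} {P Y : Matrix (Fin n) (Fin n) ℝ}
    (hK : SchurStable (A - B * K)) (hP : P = closedLoopCost A B Q R K P)
    (hY : Y ≤ closedLoopCost A B Q R K Y) : Y ≤ P := by
  rw [← sub_nonneg]
  refine hK.nonneg_of_lyapunov (sub_nonneg.mpr hY) ?_
  rw [← closedLoopCost_sub_closedLoopCost]
  conv_lhs => rw [hP]
  abel

theorem le_of_closedLoopCost_le {K : Matrix (Fin m) (Fin n) ℝ} {P Y : Matrix (Fin n) (Fin n) ℝ}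
    (hK : SchurStable (A - B * K)) (hP : P = closedLoopCost A B Q R K P)
    (hY : closedLoopCost A B Q R K Y ≤ Y) : P ≤ Y := by
  rw [← sub_nonneg]
  refine hK.nonneg_of_lyapunov (sub_nonneg.mpr hY) ?_
  rw [← closedLoopCost_sub_closedLoopCost]
  conv_lhs => rw [hP]
  abel

theorem nonneg_of_eq_closedLoopCost {K : Matrix (Fin m) (Fin n) ℝ} {P : Matrix (Fin n) (Fin n) ℝ}
    (hK : SchurStable (A - B * K)) (hQ : 0 ≤ Q) (hR : 0 ≤ R)
    (hP : P = closedLoopCost A B Q R K P) : 0 ≤ P :=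
  le_of_le_closedLoopCost hK hP <| by
    simpa [closedLoopCost] using add_nonneg hQ (transpose_mul_mul_nonneg hR K)

/-- A quadratic Lyapunov function decreasing along `A - BK` is incompatible with an eigenvalue
`μ`, `1 ≤ |μ|`: the decrease forces `Q` and `K` to vanish on the real invariant plane of `μ`,
which observability excludes. -/
theorem schurStable_of_closedLoopCost_le (hQ : Q.PosSemidef) (hR : R.PosDef)
    (hObs : ∀ x : Fin n → ℝ, (∀ k : ℕ, Q *ᵥ (A ^ k *ᵥ x) = 0) → x = 0)
    {K : Matrix (Fin m) (Fin n) ℝ} {X : Matrix (Fin n) (Fin n) ℝ} (hX : 0 ≤ X)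
    (hK : closedLoopCost A B Q R K X ≤ X) : SchurStable (A - B * K) := by
  intro μ hμ
  by_contra! hμ1
  obtain ⟨x, y, hxy, hMx, hMy⟩ := exists_rotation_of_mem_spectrum hμ
  set M := A - B * K
  have hdecr : ∀ z, z ⬝ᵥ Q *ᵥ z + (K *ᵥ z) ⬝ᵥ R *ᵥ (K *ᵥ z) + (M *ᵥ z) ⬝ᵥ X *ᵥ (M *ᵥ z)
      ≤ z ⬝ᵥ X *ᵥ z := fun z => by
    have := (le_iff.mp hK).dotProduct_mulVec_nonneg z
    rw [sub_mulVec, dotProduct_sub] at this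
    simp only [star_trivial, closedLoopCost, add_mulVec,
      dotProduct_add, dotProduct_mulVec_transpose_mul_mul] at this
    linarith
  have hrot := dotProduct_mulVec_rotation (isHermitian_iff_isSymm.mp hX.posSemidef.isHermitian)
    x y μ.re μ.im
  rw [← hMx, ← hMy] at hrot
  have hμ2 : 1 ≤ μ.re ^ 2 + μ.im ^ 2 := by
    have := Complex.sq_norm μ
    rw [Complex.normSq_apply] at this
    nlinarith [norm_nonneg μ]
  have hXnn : ∀ z, 0 ≤ z ⬝ᵥ X *ᵥ z := fun z => by
    simpa using hX.posSemidef.dotProduct_mulVec_nonneg z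
  have hQRnn : ∀ z, 0 ≤ z ⬝ᵥ Q *ᵥ z + (K *ᵥ z) ⬝ᵥ R *ᵥ (K *ᵥ z) := fun z => by
    simpa using add_nonneg (hQ.dotProduct_mulVec_nonneg z)
      (hR.posSemidef.dotProduct_mulVec_nonneg (K *ᵥ z))
  have hsum := mul_le_mul_of_nonneg_right hμ2 (add_nonneg (hXnn x) (hXnn y))
  obtain ⟨hQx, hKx⟩ := mulVec_eq_zero_of_dotProduct_mulVec_add_le_zero hQ hR (z := x)
    (by linarith [hdecr x, hdecr y, hQRnn y])
  obtain ⟨hQy, hKy⟩ := mulVec_eq_zero_of_dotProduct_mulVec_add_le_zero hQ hR (z := y)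
    (by linarith [hdecr x, hdecr y, hQRnn x])
  have hAM : ∀ z, K *ᵥ z = 0 → A *ᵥ z = M *ᵥ z := fun z hz => by
    simp [M, sub_mulVec, ← mulVec_mulVec, hz]
  obtain ⟨rfl, rfl⟩ := eq_zero_of_rotation hObs ((hAM x hKx).trans hMx) ((hAM y hKy).trans hMy)
    hQx hQy
  simp at hxy

theorem closedLoopCost_succ_le {K : ℕ → Matrix (Fin m) (Fin n) ℝ}
    {P : ℕ → Matrix (Fin n) (Fin n) ℝ} (hR : R.PosDef)
    (hP : ∀ i, P i = closedLoopCost A B Q R (K i) (P i))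
    (hKupd : ∀ i, K (i + 1) = riccatiGain A B R (P i)) {i : ℕ} (hPi : 0 ≤ P i) :
    closedLoopCost A B Q R (K (i + 1)) (P i) ≤ P i := by
  rw [hKupd i]
  exact (closedLoopCost_riccatiGain_le hR hPi (K i)).trans_eq (hP i).symm

theorem policyIteration_schurStable_and_nonneg (hQ : Q.PosSemidef) (hR : R.PosDef)
    (hObs : ∀ x : Fin n → ℝ, (∀ k : ℕ, Q *ᵥ (A ^ k *ᵥ x) = 0) → x = 0)
    {K : ℕ → Matrix (Fin m) (Fin n) ℝ} {P : ℕ → Matrix (Fin n) (Fin n) ℝ}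
    (hK0 : SchurStable (A - B * K 0)) (hP : ∀ i, P i = closedLoopCost A B Q R (K i) (P i))
    (hKupd : ∀ i, K (i + 1) = riccatiGain A B R (P i)) (i : ℕ) :
    SchurStable (A - B * K i) ∧ 0 ≤ P i := by
  induction i with
  | zero => exact ⟨hK0, nonneg_of_eq_closedLoopCost hK0 hQ.nonneg hR.posSemidef.nonneg (hP 0)⟩
  | succ i ih =>
    have hK := schurStable_of_closedLoopCost_le hQ hR hObs ih.2
      (closedLoopCost_succ_le hR hP hKupd ih.2)
    exact ⟨hK, nonneg_of_eq_closedLoopCost hK hQ.nonneg hR.posSemidef.nonneg (hP (i + 1))⟩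

theorem policyIteration_tendsto_of_tendsto {K : ℕ → Matrix (Fin m) (Fin n) ℝ}
    {P : ℕ → Matrix (Fin n) (Fin n) ℝ} {Plim : Matrix (Fin n) (Fin n) ℝ} (hR : R.PosDef)
    (hP : ∀ i, P i = closedLoopCost A B Q R (K i) (P i))
    (hKupd : ∀ i, K (i + 1) = riccatiGain A B R (P i))
    (hPlim : Tendsto P atTop (𝓝 Plim)) (hPlim0 : 0 ≤ Plim) :
    Tendsto K atTop (𝓝 (riccatiGain A B R Plim)) ∧
      closedLoopCost A B Q R (riccatiGain A B R Plim) Plim = Plim := by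
  have hKlim : Tendsto K atTop (𝓝 (riccatiGain A B R Plim)) :=
    (tendsto_add_atTop_iff_nat 1).mp <|
      ((continuousAt_riccatiGain hR hPlim0).tendsto.comp hPlim).congr fun i => (hKupd i).symm
  exact ⟨hKlim, tendsto_nhds_unique (tendsto_closedLoopCost hKlim hPlim) (hPlim.congr hP)⟩

end PolicyIteration

theorem stmt_2_general {n m : ℕ}
    (A : Matrix (Fin n) (Fin n) ℝ) (B : Matrix (Fin n) (Fin m) ℝ)
    (Q : Matrix (Fin n) (Fin n) ℝ) (R : Matrix (Fin m) (Fin m) ℝ)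
    (hQ : Q.PosSemidef) (hR : R.PosDef)
    (hObs : ∀ x : Fin n → ℝ, (∀ k : ℕ, Q.mulVec ((A ^ k).mulVec x) = 0) → x = 0)
    (K : ℕ → Matrix (Fin m) (Fin n) ℝ) (P : ℕ → Matrix (Fin n) (Fin n) ℝ)
    (hK0 : SchurStable (A - B * K 0))
    (hP : ∀ i, P i = Q + (K i)ᵀ * R * (K i) + (A - B * K i)ᵀ * (P i) * (A - B * K i))
    (hKupd : ∀ i, K (i + 1) = (R + Bᵀ * (P i) * B)⁻¹ * (Bᵀ * (P i) * A))
    (Pstar : Matrix (Fin n) (Fin n) ℝ) (hPstar : Pstar.PosDef)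
    (hARE : Aᵀ * Pstar * A - Pstar
        - Aᵀ * Pstar * B * (R + Bᵀ * Pstar * B)⁻¹ * (Bᵀ * Pstar * A) + Q = 0)
    (Kstar : Matrix (Fin m) (Fin n) ℝ)
    (hKstar : Kstar = (R + Bᵀ * Pstar * B)⁻¹ * (Bᵀ * Pstar * A)) :
    (∀ k l, Tendsto (fun i => P i k l) atTop (nhds (Pstar k l))) ∧
      (∀ k l, Tendsto (fun i => K i k l) atTop (nhds (Kstar k l))) := by
  replace hP : ∀ i, P i = closedLoopCost A B Q R (K i) (P i) := hP
  replace hKupd : ∀ i, K (i + 1) = riccatiGain A B R (P i) := hKupd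
  replace hKstar : Kstar = riccatiGain A B R Pstar := hKstar
  subst hKstar
  have hPstar0 : 0 ≤ Pstar := hPstar.posSemidef.nonneg
  have hfix := closedLoopCost_riccatiGain_eq_self hR hPstar0 hARE
  have hiter := policyIteration_schurStable_and_nonneg hQ hR hObs hK0 hP hKupd
  have hlow : ∀ i, Pstar ≤ P i := fun i => le_of_le_closedLoopCost (hiter i).1 (hP i)
    (hfix.symm.trans_le (closedLoopCost_riccatiGain_le hR hPstar0 (K i)))
  have hanti : Antitone P := antitone_nat_of_succ_le fun i =>
    le_of_closedLoopCost_le (hiter (i + 1)).1 (hP (i + 1))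
      (closedLoopCost_succ_le hR hP hKupd (hiter i).2)
  obtain ⟨Plim, hPlim⟩ :=
    exists_tendsto_of_antitone_of_bddBelow hanti ⟨Pstar, Set.forall_mem_range.mpr hlow⟩
  have hPstar_le : Pstar ≤ Plim := ge_of_tendsto' hPlim hlow
  obtain ⟨hKlim, hfixlim⟩ :=
    policyIteration_tendsto_of_tendsto hR hP hKupd hPlim (hPstar0.trans hPstar_le)
  have hKstar_stable := schurStable_of_closedLoopCost_le hQ hR hObs hPstar0 hfix.le
  have hPlim_le : Plim ≤ Pstar := le_of_le_closedLoopCost hKstar_stable hfix.symm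
    (hfixlim.symm.trans_le (closedLoopCost_riccatiGain_le hR (hPstar0.trans hPstar_le) _))
  obtain rfl := le_antisymm hPlim_le hPstar_le
  exact ⟨fun k l => tendsto_pi_nhds.mp (tendsto_pi_nhds.mp hPlim k) l,
    fun k l => tendsto_pi_nhds.mp (tendsto_pi_nhds.mp hKlim k) l⟩

theorem stmt_2 {n m : ℕ}
    (A : Matrix (Fin n) (Fin n) ℝ) (B : Matrix (Fin n) (Fin m) ℝ)
    (Q : Matrix (Fin n) (Fin n) ℝ) (R : Matrix (Fin m) (Fin m) ℝ)
    (hQ : Q.PosSemidef) (hR : R.PosDef)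
    (hObs : ∀ x : Fin n → ℝ, (∀ k : ℕ, Q.mulVec ((A ^ k).mulVec x) = 0) → x = 0)
    (K : ℕ → Matrix (Fin m) (Fin n) ℝ) (P : ℕ → Matrix (Fin n) (Fin n) ℝ)
    (hK0 : SchurStable (A - B * K 0))
    (hPsymm : ∀ i, (P i).IsSymm)
    (hP : ∀ i, P i = Q + (K i)ᵀ * R * (K i) + (A - B * K i)ᵀ * (P i) * (A - B * K i))
    (hKupd : ∀ i, K (i + 1) = (R + Bᵀ * (P i) * B)⁻¹ * (Bᵀ * (P i) * A))
    (Pstar : Matrix (Fin n) (Fin n) ℝ) (hPstar : Pstar.PosDef)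
    (hARE : Aᵀ * Pstar * A - Pstar
        - Aᵀ * Pstar * B * (R + Bᵀ * Pstar * B)⁻¹ * (Bᵀ * Pstar * A) + Q = 0)
    (Kstar : Matrix (Fin m) (Fin n) ℝ)
    (hKstar : Kstar = (R + Bᵀ * Pstar * B)⁻¹ * (Bᵀ * Pstar * A)) :
    (∀ k l, Tendsto (fun i => P i k l) atTop (nhds (Pstar k l))) ∧
      (∀ k l, Tendsto (fun i => K i k l) atTop (nhds (Kstar k l))) :=
  stmt_2_general A B Q R hQ hR hObs K P hK0 hP hKupd Pstar hPstar hARE Kstar hKstar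
end

section
/- Let γ > 0 and let K be an m×n real matrix such that γ(A − BK) is Schur stable. Let P be a symmetric positive definite matrix satisfying γ²(A − BK)ᵀP(A − BK) − P + Q + KᵀRK = 0, and define the updated gain K' = (BᵀPB + (1/γ²)R)⁻¹BᵀPA. Then γ(A − BK') is Schur stable. -/
/-!
Write `N = γ (A - B K')`. The new gain `K'` is the stationary point of the quadratic cost
`L ↦ γ² (A - B L)ᵀ P (A - B L) + Lᵀ R L`, so completing the square in `L` turns the Lyapunov
equation of the old gain into
`P - Nᵀ P N = Q + K'ᵀ R K' + (K - K')ᵀ (γ² Bᵀ P B + R) (K - K')`,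
a sum of positive semidefinite terms. If `N x = μ x` with `x ≠ 0` and `‖μ‖ ≥ 1`, the left side has
the nonpositive quadratic form `(1 - ‖μ‖²) x* P x` at `x`, so each term vanishes there: `Q x = 0`
and `K' x = 0`. Then `A x = (μ / γ) x`, and an eigenvector of `A` in the kernel of `Q` is excluded
by observability (the Popov–Belevitch–Hautus test).
-/

open Matrix

open scoped ComplexOrder MatrixOrder

namespace Matrix

variable {m n 𝕜 : Type*} [Fintype m] [Fintype n]

theorem exists_mulVec_eq_smul_of_mem_spectrum {K : Type*} [Field K] [DecidableEq n]
    {M : Matrix n n K} {μ : K} (h : μ ∈ spectrum K M) : ∃ x ≠ 0, M *ᵥ x = μ • x := by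
  rw [← spectrum_toLin', ← Module.End.hasEigenvalue_iff_mem_spectrum] at h
  obtain ⟨x, hx⟩ := h.exists_hasEigenvector
  exact ⟨x, hx.2, by simpa using hx.apply_eq_smul⟩

theorem pow_mulVec_eq_pow_smul {R : Type*} [CommSemiring R] [DecidableEq n] {M : Matrix n n R}
    {c : R} {x : n → R} (h : M *ᵥ x = c • x) (k : ℕ) : (M ^ k) *ᵥ x = c ^ k • x := by
  induction k with
  | zero => simp
  | succ k ih => rw [pow_succ', ← mulVec_mulVec, ih, mulVec_smul, h, smul_smul, ← pow_succ]

theorem transpose_mul_mul_completeSquare {α : Type*} [CommRing α]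
    (A : Matrix n n α) (B : Matrix n m α) (P : Matrix n n α) (R : Matrix m m α)
    (K K' : Matrix m n α) (hP : P.IsSymm) (hR : R.IsSymm)
    (hK' : (Bᵀ * P * B + R) * K' = Bᵀ * P * A) :
    (A - B * K)ᵀ * P * (A - B * K) + Kᵀ * R * K =
      (A - B * K')ᵀ * P * (A - B * K') + K'ᵀ * R * K' +
        (K - K')ᵀ * (Bᵀ * P * B + R) * (K - K') := by
  have hK't : K'ᵀ * (Bᵀ * P * B + R) = Aᵀ * P * B := by
    simpa [transpose_mul, transpose_add, hP.eq, hR.eq, Matrix.mul_assoc] using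
      congrArg transpose hK'
  have expand : ∀ L : Matrix m n α, (A - B * L)ᵀ * P * (A - B * L) + Lᵀ * R * L =
      Aᵀ * P * A - Aᵀ * P * B * L - Lᵀ * (Bᵀ * P * A) + Lᵀ * (Bᵀ * P * B + R) * L := by
    intro L
    simp only [transpose_sub, transpose_mul, Matrix.sub_mul, Matrix.mul_sub, Matrix.mul_add,
      Matrix.add_mul, Matrix.mul_assoc]
    abel
  have hdiff : (K - K')ᵀ * (Bᵀ * P * B + R) * (K - K') = Kᵀ * (Bᵀ * P * B + R) * K
      - Kᵀ * ((Bᵀ * P * B + R) * K') - K'ᵀ * (Bᵀ * P * B + R) * K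
      + K'ᵀ * (Bᵀ * P * B + R) * K' := by
    simp only [transpose_sub, Matrix.sub_mul, Matrix.mul_sub, Matrix.mul_assoc]
    abel
  have hK'G : K'ᵀ * (Bᵀ * P * A) = Aᵀ * P * B * K' := by
    rw [← hK', ← Matrix.mul_assoc, hK't]
  rw [expand, expand, hdiff, hK', hK't, hK'G]
  abel

theorem sub_transpose_mul_mul_eq_of_lyapunov {α : Type*} [Field α] {A P Q : Matrix n n α}
    {B : Matrix n m α} {R : Matrix m m α} {K K' : Matrix m n α} {γ : α} (hγ : γ ≠ 0)
    (hP : P.IsSymm) (hR : R.IsSymm)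
    (hLyap : γ ^ 2 • ((A - B * K)ᵀ * P * (A - B * K)) - P + Q + Kᵀ * R * K = 0)
    (hK' : (Bᵀ * P * B + (1 / γ ^ 2) • R) * K' = Bᵀ * P * A) :
    P - (γ • (A - B * K'))ᵀ * P * (γ • (A - B * K')) =
      Q + K'ᵀ * R * K' + (K - K')ᵀ * (Bᵀ * (γ ^ 2 • P) * B + R) * (K - K') := by
  have hS : Bᵀ * (γ ^ 2 • P) * B + R = γ ^ 2 • (Bᵀ * P * B + (1 / γ ^ 2) • R) := by
    rw [smul_add, smul_smul, mul_one_div_cancel (pow_ne_zero 2 hγ), one_smul, Matrix.mul_smul,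
      Matrix.smul_mul]
  have hc := transpose_mul_mul_completeSquare A B (γ ^ 2 • P) R K K' (hP.smul _) hR
    (by rw [hS, Matrix.smul_mul, hK', Matrix.mul_smul, Matrix.smul_mul])
  simp only [transpose_smul, Matrix.smul_mul, Matrix.mul_smul, smul_smul, ← pow_two] at hc ⊢
  linear_combination (norm := abel) hc - hLyap

section RCLike

variable [RCLike 𝕜]

theorem PosSemidef.add_mulVec_eq_zero_iff {A B : Matrix n n 𝕜} (hA : A.PosSemidef)
    (hB : B.PosSemidef) {x : n → 𝕜} : (A + B) *ᵥ x = 0 ↔ A *ᵥ x = 0 ∧ B *ᵥ x = 0 := by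
  rw [← (hA.add hB).dotProduct_mulVec_zero_iff, ← hA.dotProduct_mulVec_zero_iff,
    ← hB.dotProduct_mulVec_zero_iff, add_mulVec, dotProduct_add]
  exact add_eq_zero_iff_of_nonneg (hA.dotProduct_mulVec_nonneg x) (hB.dotProduct_mulVec_nonneg x)

theorem dotProduct_conjTranspose_mul_mul_mulVec (K : Matrix m n 𝕜) (R : Matrix m m 𝕜)
    (x : n → 𝕜) : star x ⬝ᵥ (Kᴴ * R * K) *ᵥ x = star (K *ᵥ x) ⬝ᵥ R *ᵥ (K *ᵥ x) := by
  rw [← mulVec_mulVec, ← mulVec_mulVec, dotProduct_mulVec, star_mulVec]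

theorem PosDef.mulVec_eq_zero_of_conjTranspose_mul_mul {R : Matrix m m 𝕜} (hR : R.PosDef)
    {K : Matrix m n 𝕜} {x : n → 𝕜} (h : (Kᴴ * R * K) *ᵥ x = 0) : K *ᵥ x = 0 := by
  by_contra hKx
  have := hR.dotProduct_mulVec_pos hKx
  rw [← dotProduct_conjTranspose_mul_mul_mulVec, h, dotProduct_zero] at this
  exact lt_irrefl _ this

theorem PosSemidef.mulVec_eq_zero_of_sub_conjTranspose_mul_mul_eq {P N W : Matrix n n 𝕜}
    (hP : P.PosSemidef) (hW : W.PosSemidef) (hPW : P - Nᴴ * P * N = W) {μ : 𝕜} {x : n → 𝕜}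
    (hx : N *ᵥ x = μ • x) (hμ : 1 ≤ ‖μ‖) : W *ᵥ x = 0 := by
  have hform : star x ⬝ᵥ W *ᵥ x = ((1 - ‖μ‖ ^ 2 : ℝ) : 𝕜) * (star x ⬝ᵥ P *ᵥ x) := by
    rw [← hPW, sub_mulVec, dotProduct_sub, dotProduct_conjTranspose_mul_mul_mulVec, hx, star_smul,
      mulVec_smul, smul_dotProduct, dotProduct_smul, smul_smul, smul_eq_mul, RCLike.star_def,
      RCLike.conj_mul]
    push_cast
    ring
  rw [← hW.dotProduct_mulVec_zero_iff]
  refine le_antisymm ?_ (hW.dotProduct_mulVec_nonneg x)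
  rw [hform]
  refine mul_nonpos_of_nonpos_of_nonneg ?_ (hP.dotProduct_mulVec_nonneg x)
  rw [RCLike.ofReal_nonpos]
  nlinarith

theorem mulVec_eq_zero_of_sub_conjTranspose_mul_mul_eq_add {P N Q : Matrix n n 𝕜}
    {R S : Matrix m m 𝕜} {K D : Matrix m n 𝕜} (hP : P.PosSemidef) (hQ : Q.PosSemidef)
    (hR : R.PosDef) (hS : S.PosSemidef)
    (hPN : P - Nᴴ * P * N = Q + Kᴴ * R * K + Dᴴ * S * D) {μ : 𝕜} {x : n → 𝕜}
    (hx : N *ᵥ x = μ • x) (hμ : 1 ≤ ‖μ‖) : Q *ᵥ x = 0 ∧ K *ᵥ x = 0 := by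
  have hKRK := hR.posSemidef.conjTranspose_mul_mul_same K
  have hDSD := hS.conjTranspose_mul_mul_same D
  have hWx := hP.mulVec_eq_zero_of_sub_conjTranspose_mul_mul_eq ((hQ.add hKRK).add hDSD) hPN hx hμ
  obtain ⟨hQKx, -⟩ := ((hQ.add hKRK).add_mulVec_eq_zero_iff hDSD).1 hWx
  obtain ⟨hQx, hKRKx⟩ := (hQ.add_mulVec_eq_zero_iff hKRK).1 hQKx
  exact ⟨hQx, hR.mulVec_eq_zero_of_conjTranspose_mul_mul hKRKx⟩

omit [Fintype m] [Fintype n] in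
theorem transpose_map_algebraMap (M : Matrix m n ℝ) :
    Mᵀ.map (algebraMap ℝ 𝕜) = (M.map (algebraMap ℝ 𝕜))ᴴ := by
  ext; simp

theorem PosSemidef.map_algebraMap {A : Matrix n n ℝ} (hA : A.PosSemidef) :
    (A.map (algebraMap ℝ 𝕜)).PosSemidef := by
  classical
  obtain ⟨X, rfl⟩ := CStarAlgebra.nonneg_iff_eq_star_mul_self.mp hA.nonneg
  rw [star_eq_conjTranspose, conjTranspose_eq_transpose_of_trivial, Matrix.map_mul,
    transpose_map_algebraMap]
  exact posSemidef_conjTranspose_mul_self _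

theorem PosDef.map_algebraMap {A : Matrix n n ℝ} (hA : A.PosDef) :
    (A.map (algebraMap ℝ 𝕜)).PosDef := by
  classical
  rw [hA.posSemidef.map_algebraMap.posDef_iff_det_ne_zero, ← RingHom.mapMatrix_apply,
    ← RingHom.map_det]
  exact (map_ne_zero _).2 hA.det_pos.ne'

theorem map_mulVec_eq_zero_of_sub_transpose_mul_mul_eq_add {P N Q : Matrix n n ℝ}
    {R S : Matrix m m ℝ} {K D : Matrix m n ℝ} (hP : P.PosSemidef) (hQ : Q.PosSemidef)
    (hR : R.PosDef) (hS : S.PosSemidef)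
    (hPN : P - Nᵀ * P * N = Q + Kᵀ * R * K + Dᵀ * S * D) {μ : 𝕜} {x : n → 𝕜}
    (hx : N.map (algebraMap ℝ 𝕜) *ᵥ x = μ • x) (hμ : 1 ≤ ‖μ‖) :
    Q.map (algebraMap ℝ 𝕜) *ᵥ x = 0 ∧ K.map (algebraMap ℝ 𝕜) *ᵥ x = 0 := by
  classical
  have hPNc := congrArg (algebraMap ℝ 𝕜).mapMatrix hPN
  simp only [map_sub, map_add, map_mul, RingHom.mapMatrix_apply, Matrix.map_mul,
    transpose_map_algebraMap] at hPNc
  exact mulVec_eq_zero_of_sub_conjTranspose_mul_mul_eq_add hP.map_algebraMap hQ.map_algebraMap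
    hR.map_algebraMap hS.map_algebraMap hPNc hx hμ

omit [Fintype m] in
theorem re_map_algebraMap_mulVec (M : Matrix m n ℝ) (x : n → 𝕜) (i : m) :
    RCLike.re ((M.map (algebraMap ℝ 𝕜) *ᵥ x) i) = (M *ᵥ fun j => RCLike.re (x j)) i := by
  simp [mulVec, dotProduct, map_sum]

omit [Fintype m] in
theorem im_map_algebraMap_mulVec (M : Matrix m n ℝ) (x : n → 𝕜) (i : m) :
    RCLike.im ((M.map (algebraMap ℝ 𝕜) *ᵥ x) i) = (M *ᵥ fun j => RCLike.im (x j)) i := by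
  simp [mulVec, dotProduct, map_sum]

omit [Fintype m] in
theorem eq_zero_of_forall_map_algebraMap_mulVec_eq_zero {ι : Type*} {M : ι → Matrix m n ℝ}
    (hM : ∀ y : n → ℝ, (∀ i, M i *ᵥ y = 0) → y = 0) {x : n → 𝕜}
    (hx : ∀ i, (M i).map (algebraMap ℝ 𝕜) *ᵥ x = 0) : x = 0 := by
  have hre := hM (fun j => RCLike.re (x j)) fun i => funext fun k => by
    rw [← re_map_algebraMap_mulVec, hx i]; simp
  have him := hM (fun j => RCLike.im (x j)) fun i => funext fun k => by
    rw [← im_map_algebraMap_mulVec, hx i]; simp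
  funext j
  apply RCLike.ext
  · simpa using congrFun hre j
  · simpa using congrFun him j

theorem map_mulVec_eq_div_smul_of_smul_sub_mul {A : Matrix n n ℝ} {B : Matrix n m ℝ}
    {K : Matrix m n ℝ} {γ : ℝ} (hγ : γ ≠ 0) {μ : 𝕜} {x : n → 𝕜}
    (hx : (γ • (A - B * K)).map (algebraMap ℝ 𝕜) *ᵥ x = μ • x)
    (hKx : K.map (algebraMap ℝ 𝕜) *ᵥ x = 0) : A.map (algebraMap ℝ 𝕜) *ᵥ x = (μ / γ) • x := by
  have hmap : (γ • (A - B * K)).map (algebraMap ℝ 𝕜) = (γ : 𝕜) •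
      (A.map (algebraMap ℝ 𝕜) - B.map (algebraMap ℝ 𝕜) * K.map (algebraMap ℝ 𝕜)) := by
    ext; simp [Matrix.mul_apply, map_sum]
  rw [hmap, smul_mulVec, sub_mulVec, ← mulVec_mulVec, hKx, mulVec_zero, sub_zero] at hx
  rw [div_eq_inv_mul, mul_smul, ← hx, inv_smul_smul₀ (RCLike.ofReal_ne_zero.2 hγ)]

theorem eq_zero_of_observable_of_mulVec_eq_smul [DecidableEq n] {A Q : Matrix n n ℝ}
    (hObs : ∀ y : n → ℝ, (∀ k : ℕ, Q *ᵥ ((A ^ k) *ᵥ y) = 0) → y = 0) {ν : 𝕜} {x : n → 𝕜}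
    (hAx : A.map (algebraMap ℝ 𝕜) *ᵥ x = ν • x) (hQx : Q.map (algebraMap ℝ 𝕜) *ᵥ x = 0) :
    x = 0 := by
  refine eq_zero_of_forall_map_algebraMap_mulVec_eq_zero (M := fun k => Q * A ^ k)
    (fun y hy => hObs y fun k => by rw [mulVec_mulVec]; exact hy k) fun k => ?_
  rw [Matrix.map_mul, Matrix.map_pow, ← mulVec_mulVec, pow_mulVec_eq_pow_smul hAx, mulVec_smul,
    hQx, smul_zero]

end RCLike

end Matrix

theorem stmt_5_general {n m : ℕ}
    (A : Matrix (Fin n) (Fin n) ℝ) (B : Matrix (Fin n) (Fin m) ℝ)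
    (Q : Matrix (Fin n) (Fin n) ℝ) (R : Matrix (Fin m) (Fin m) ℝ)
    (hQ : Q.PosSemidef) (hR : R.PosDef)
    (hObs : ∀ x : Fin n → ℝ, (∀ k : ℕ, Q.mulVec ((A ^ k).mulVec x) = 0) → x = 0)
    (γ : ℝ) (hγ : 0 < γ)
    (K : Matrix (Fin m) (Fin n) ℝ)
    (P : Matrix (Fin n) (Fin n) ℝ) (hPpos : P.PosDef)
    (hP : γ ^ 2 • ((A - B * K)ᵀ * P * (A - B * K)) - P + Q + Kᵀ * R * K = 0)
    (K' : Matrix (Fin m) (Fin n) ℝ)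
    (hK' : K' = (Bᵀ * P * B + (1 / γ ^ 2) • R)⁻¹ * (Bᵀ * P * A)) :
    SchurStable (γ • (A - B * K')) := by
  have hPsymm : P.IsSymm := by simpa [IsSymm] using hPpos.isHermitian.eq
  have hRsymm : R.IsSymm := by simpa [IsSymm] using hR.isHermitian.eq
  have hgain : (Bᵀ * P * B + (1 / γ ^ 2) • R) * K' = Bᵀ * P * A := by
    have hS : (Bᵀ * P * B + (1 / γ ^ 2) • R).PosDef := by
      refine PosDef.posSemidef_add ?_ (hR.smul (by positivity))
      simpa using hPpos.posSemidef.conjTranspose_mul_mul_same B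
    rw [hK', mul_nonsing_inv_cancel_left _ _ hS.det_pos.ne'.isUnit]
  have hS : (Bᵀ * (γ ^ 2 • P) * B + R).PosSemidef := by
    refine PosSemidef.add ?_ hR.posSemidef
    simpa using (hPpos.smul (pow_pos hγ 2)).posSemidef.conjTranspose_mul_mul_same B
  have hW := sub_transpose_mul_mul_eq_of_lyapunov hγ.ne' hPsymm hRsymm hP hgain
  intro μ hμ
  by_contra! hμ1
  obtain ⟨x, hx0, hx⟩ := exists_mulVec_eq_smul_of_mem_spectrum hμ
  obtain ⟨hQx, hK'x⟩ :=
    map_mulVec_eq_zero_of_sub_transpose_mul_mul_eq_add hPpos.posSemidef hQ hR hS hW hx hμ1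
  exact hx0 <| eq_zero_of_observable_of_mulVec_eq_smul hObs
    (map_mulVec_eq_div_smul_of_smul_sub_mul hγ.ne' hx hK'x) hQx

theorem stmt_5 {n m : ℕ}
    (A : Matrix (Fin n) (Fin n) ℝ) (B : Matrix (Fin n) (Fin m) ℝ)
    (Q : Matrix (Fin n) (Fin n) ℝ) (R : Matrix (Fin m) (Fin m) ℝ)
    (hQ : Q.PosSemidef) (hR : R.PosDef)
    (hObs : ∀ x : Fin n → ℝ, (∀ k : ℕ, Q.mulVec ((A ^ k).mulVec x) = 0) → x = 0)
    (γ : ℝ) (hγ : 0 < γ)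
    (K : Matrix (Fin m) (Fin n) ℝ)
    (hK : SchurStable (γ • (A - B * K)))
    (P : Matrix (Fin n) (Fin n) ℝ) (hPpos : P.PosDef)
    (hP : γ ^ 2 • ((A - B * K)ᵀ * P * (A - B * K)) - P + Q + Kᵀ * R * K = 0)
    (K' : Matrix (Fin m) (Fin n) ℝ)
    (hK' : K' = (Bᵀ * P * B + (1 / γ ^ 2) • R)⁻¹ * (Bᵀ * P * A)) :
    SchurStable (γ • (A - B * K')) :=
  stmt_5_general A B Q R hQ hR hObs γ hγ K P hPpos hP K' hK'
end
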